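/- arXiv:math/0103006 — 2 statements merged into one kernel-verified Lean document; each statement's English description precedes it below -/
import Mathlib

section
/- With notation as in the symplectic realization, for any simple root vector X_{α_k} = X_{ε_k − ε_{k+1}} (1 ≤ k ≤ ℓ−1) of sp_{2ℓ}(ℂ), the adjoint action on the determinant Δ_m = det((X_{ε_i+ε_j})_{1≤i,j≤m}) in U(sp_{2ℓ}(ℂ)) vanishes: [X_{ε_k−ε_{k+1}}, Δ_m] = 0, and also [X_{2ε_ℓ}, Δ_m] = 0. -/
/-- Leibniz determinant for a (possibly noncommutative) ring, with factors taken
in the row order `0, 1, …, m-1`. -/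
noncomputable def ncdet {R : Type*} [Ring R] {m : ℕ} (M : Fin m → Fin m → R) : R :=
  ∑ σ : Equiv.Perm (Fin m),
    ((Equiv.Perm.sign σ : ℤ) • ((List.finRange m).map (fun i => M i (σ i))).prod)

section AuxSec
variable {U : Type*} [Ring U]

lemma ncdet_map {R S : Type*} [Ring R] [Ring S] (f : R →+* S) {m : ℕ}
    (M : Fin m → Fin m → R) : f (ncdet M) = ncdet (fun i j => f (M i j)) := by
  unfold ncdet
  rw [map_sum]
  refine Finset.sum_congr rfl fun σ _ => ?_
  rw [map_zsmul, map_list_prod, List.map_map]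
  rfl

lemma ncdet_eq_det {R : Type*} [CommRing R] {m : ℕ} (M : Fin m → Fin m → R) :
    ncdet M = Matrix.det (Matrix.of fun i j => M j i) := by
  unfold ncdet
  rw [Matrix.det_apply]
  refine Finset.sum_congr rfl fun σ _ => ?_
  rw [Units.smul_def]
  congr 1

lemma ncdet_zero_comm {R : Type*} [CommRing R] {m : ℕ} (M : Fin m → Fin m → R)
    {p q : Fin m} (hpq : p ≠ q)
    (h : (∀ j, M p j = M q j) ∨ (∀ i, M i p = M i q)) : ncdet M = 0 := by
  rw [ncdet_eq_det]
  rcases h with hr | hcq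
  · rw [← Matrix.det_transpose]
    refine Matrix.det_zero_of_row_eq hpq ?_
    funext j
    exact hr j
  · refine Matrix.det_zero_of_row_eq hpq ?_
    funext i
    exact hcq i

/-- `ncdet` of a matrix with pairwise commuting entries vanishes if two rows or
two columns coincide. -/
lemma ncdet_zero_of_eq {m : ℕ} (M : Fin m → Fin m → U)
    (hc : ∀ i j k l, M i j * M k l = M k l * M i j)
    {p q : Fin m} (hpq : p ≠ q)
    (h : (∀ j, M p j = M q j) ∨ (∀ i, M i p = M i q)) : ncdet M = 0 := by
  classical
  set S : Set U := Set.range (fun ij : Fin m × Fin m => M ij.1 ij.2) with hS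
  letI : CommRing (Subring.closure S) := Subring.closureCommRingOfComm (by
    rintro x ⟨⟨i, j⟩, rfl⟩ y ⟨⟨a, b⟩, rfl⟩
    exact hc i j a b)
  set N : Fin m → Fin m → Subring.closure S :=
    fun i j => ⟨M i j, Subring.subset_closure ⟨(i, j), rfl⟩⟩ with hN
  have hmap : (Subring.closure S).subtype (ncdet N) = ncdet M := by
    rw [ncdet_map]
    rfl
  have h0 : ncdet N = 0 := by
    refine ncdet_zero_comm N hpq ?_
    rcases h with hr | hcq
    · exact Or.inl fun j => Subtype.ext (hr j)
    · exact Or.inr fun i => Subtype.ext (hcq i)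
  rw [← hmap]
  exact (congrArg _ h0).trans (map_zero _)

lemma comm_list_prod {ι : Type*} [DecidableEq ι] (E : U) :
    ∀ (l : List ι), l.Nodup → ∀ g : ι → U,
      E * (l.map g).prod - (l.map g).prod * E =
        (l.map fun p =>
          (l.map fun i => if i = p then E * g p - g p * E else g i).prod).sum := by
  intro l
  induction l with
  | nil => simp
  | cons a l ih =>
    intro hnd g
    obtain ⟨ha, hl⟩ := List.nodup_cons.mp hnd
    have h1 : (l.map fun i => if i = a then E * g a - g a * E else g i) = l.map g :=
      List.map_congr_left fun i hi => if_neg (by rintro rfl; exact ha hi)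
    have h3 : (l.map fun p =>
          ((if a = p then E * g p - g p * E else g a) *
            (l.map fun i => if i = p then E * g p - g p * E else g i).prod))
        = l.map fun p => g a *
            (l.map fun i => if i = p then E * g p - g p * E else g i).prod := by
      refine List.map_congr_left fun p hp => ?_
      rw [if_neg (by rintro rfl; exact ha hp)]
    simp only [List.map_cons, List.prod_cons, List.sum_cons, eq_self_iff_true, if_true]
    rw [h1, h3, List.sum_map_mul_left, ← ih hl g]
    noncomm_ring

lemma prod_if_add {ι : Type*} [DecidableEq ι] :
    ∀ (l : List ι), l.Nodup → ∀ p ∈ l, ∀ (g : ι → U) (x y : U),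
      (l.map fun i => if i = p then x + y else g i).prod =
        (l.map fun i => if i = p then x else g i).prod +
          (l.map fun i => if i = p then y else g i).prod := by
  intro l
  induction l with
  | nil => simp
  | cons a l ih =>
    intro hnd p hp g x y
    obtain ⟨ha, hl⟩ := List.nodup_cons.mp hnd
    rcases List.mem_cons.mp hp with rfl | hp
    · have htail : ∀ z : U,
          (l.map fun i => if i = p then z else g i) = l.map g := fun z =>
        List.map_congr_left fun i hi => if_neg (by rintro rfl; exact ha hi)
      simp only [List.map_cons, List.prod_cons, eq_self_iff_true, if_true, htail, add_mul]
    · have hap : ¬(a = p) := by rintro rfl; exact ha hp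
      simp only [List.map_cons, List.prod_cons, if_neg hap]
      rw [ih hl p hp g x y, mul_add]

lemma prod_if_zero {ι : Type*} [DecidableEq ι] (l : List ι) {p : ι} (hp : p ∈ l) (g : ι → U) :
    (l.map fun i => if i = p then (0 : U) else g i).prod = 0 :=
  List.prod_eq_zero (List.mem_map.mpr ⟨p, hp, if_pos rfl⟩)

end AuxSec


/-- In `U(sp_{2ℓ}(ℂ))` (abstracted: `X i j = X_{ε_i+ε_j}` symmetric with pairwise
commuting entries, `E k = X_{ε_k - ε_{k+1}}` the simple raising operators with the
commutation relation `[E k, X i j] = δ_{k+1,i} X k j + δ_{k+1,j} X i k`), the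
determinant `Δ_m` of the `m × m` matrix `(X i j)` is annihilated by the adjoint
action of every simple root vector `X_{ε_k-ε_{k+1}}` and of `X_{2ε_ℓ}`. -/
theorem stmt_8 {ℓ m : ℕ} (hℓ : 1 ≤ ℓ) (hmℓ : m ≤ ℓ)
    (U : Type*) [Ring U] [Algebra ℂ U]
    (X : Fin ℓ → Fin ℓ → U) (E : Fin ℓ → Fin ℓ → U)
    (hsymm : ∀ i j, X i j = X j i)
    (hcomm : ∀ i j k l, X i j * X k l = X k l * X i j)
    (hbr : ∀ (k : Fin ℓ) (hk : (k : ℕ) + 1 < ℓ) (i j : Fin ℓ),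
      E k ⟨k + 1, hk⟩ * X i j - X i j * E k ⟨k + 1, hk⟩ =
        (if (⟨k + 1, hk⟩ : Fin ℓ) = i then X k j else 0) +
        (if (⟨k + 1, hk⟩ : Fin ℓ) = j then X i k else 0)) :
    (∀ (k : Fin ℓ) (hk : (k : ℕ) + 1 < ℓ),
      E k ⟨k + 1, hk⟩ * ncdet (fun p q : Fin m => X (Fin.castLE hmℓ p) (Fin.castLE hmℓ q)) -
        ncdet (fun p q : Fin m => X (Fin.castLE hmℓ p) (Fin.castLE hmℓ q)) *
          E k ⟨k + 1, hk⟩ = 0) ∧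
    (X ⟨ℓ - 1, by omega⟩ ⟨ℓ - 1, by omega⟩ *
        ncdet (fun p q : Fin m => X (Fin.castLE hmℓ p) (Fin.castLE hmℓ q)) -
      ncdet (fun p q : Fin m => X (Fin.castLE hmℓ p) (Fin.castLE hmℓ q)) *
        X ⟨ℓ - 1, by omega⟩ ⟨ℓ - 1, by omega⟩ = 0) := by
  classical
  constructor
  · intro k hk
    set t : Fin ℓ := ⟨(k : ℕ) + 1, hk⟩ with ht
    set Pu : Equiv.Perm (Fin m) → Fin m → U := fun σ p =>
      ((List.finRange m).map fun i => if i = p then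
          (if t = Fin.castLE hmℓ p then X k (Fin.castLE hmℓ (σ p)) else 0)
        else X (Fin.castLE hmℓ i) (Fin.castLE hmℓ (σ i))).prod with hPu
    set Pv : Equiv.Perm (Fin m) → Fin m → U := fun σ p =>
      ((List.finRange m).map fun i => if i = p then
          (if t = Fin.castLE hmℓ (σ p) then X (Fin.castLE hmℓ p) k else 0)
        else X (Fin.castLE hmℓ i) (Fin.castLE hmℓ (σ i))).prod with hPv
    have main : ∀ σ : Equiv.Perm (Fin m),
        E k t * ((List.finRange m).map fun i =>
            X (Fin.castLE hmℓ i) (Fin.castLE hmℓ (σ i))).prod -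
          ((List.finRange m).map fun i =>
            X (Fin.castLE hmℓ i) (Fin.castLE hmℓ (σ i))).prod * E k t =
          ∑ p : Fin m, (Pu σ p + Pv σ p) := by
      intro σ
      rw [comm_list_prod (E k t) (List.finRange m) (List.nodup_finRange m)
        (fun i => X (Fin.castLE hmℓ i) (Fin.castLE hmℓ (σ i))), ← Fin.sum_univ_def]
      refine Finset.sum_congr rfl fun p _ => ?_
      simp only [hPu, hPv]
      rw [← prod_if_add (List.finRange m) (List.nodup_finRange m) p (List.mem_finRange p)
          (fun i => X (Fin.castLE hmℓ i) (Fin.castLE hmℓ (σ i)))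
          (if t = Fin.castLE hmℓ p then X k (Fin.castLE hmℓ (σ p)) else 0)
          (if t = Fin.castLE hmℓ (σ p) then X (Fin.castLE hmℓ p) k else 0)]
      refine congrArg List.prod (List.map_congr_left fun i _ => ?_)
      by_cases hip : i = p
      · rw [if_pos hip, if_pos hip, ht]
        exact hbr k hk (Fin.castLE hmℓ p) (Fin.castLE hmℓ (σ p))
      · rw [if_neg hip, if_neg hip]
    have expand :
        E k t * ncdet (fun p q : Fin m => X (Fin.castLE hmℓ p) (Fin.castLE hmℓ q)) -
          ncdet (fun p q : Fin m => X (Fin.castLE hmℓ p) (Fin.castLE hmℓ q)) * E k t =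
          ∑ σ : Equiv.Perm (Fin m),
            ((Equiv.Perm.sign σ : ℤ) • ∑ p : Fin m, (Pu σ p + Pv σ p)) := by
      simp only [ncdet]
      rw [Finset.mul_sum, Finset.sum_mul, ← Finset.sum_sub_distrib]
      refine Finset.sum_congr rfl fun σ _ => ?_
      rw [mul_smul_comm, smul_mul_assoc, ← smul_sub, main σ]
    rw [expand]
    by_cases hm : (k : ℕ) + 1 < m
    · set A : Fin m → Fin m → U := fun p q =>
        if t = Fin.castLE hmℓ p then X k (Fin.castLE hmℓ q)
        else X (Fin.castLE hmℓ p) (Fin.castLE hmℓ q) with hA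
      set B : Fin m → Fin m → U := fun p q =>
        if t = Fin.castLE hmℓ q then X (Fin.castLE hmℓ p) k
        else X (Fin.castLE hmℓ p) (Fin.castLE hmℓ q) with hB
      set p0 : Fin m := ⟨(k : ℕ) + 1, hm⟩ with hp0
      set pk : Fin m := ⟨(k : ℕ), by omega⟩ with hpk
      have ht0 : t = Fin.castLE hmℓ p0 := Fin.ext rfl
      have hne : ∀ p : Fin m, p ≠ p0 → ¬(t = Fin.castLE hmℓ p) := by
        intro p hp h
        apply hp
        have h' : (k : ℕ) + 1 = (p : ℕ) := congrArg Fin.val h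
        exact Fin.ext (by simp [hp0]; omega)
      have hu : ∀ σ : Equiv.Perm (Fin m),
          ∑ p : Fin m, Pu σ p = ((List.finRange m).map fun i => A i (σ i)).prod := by
        intro σ
        rw [Fintype.sum_eq_single p0 (fun p hp => by
          simp only [hPu, if_neg (hne p hp)]
          all_goals exact prod_if_zero (List.finRange m) (List.mem_finRange p) _)]
        simp only [hPu]
        refine congrArg List.prod (List.map_congr_left fun i _ => ?_)
        by_cases hip : i = p0
        · subst hip
          rw [if_pos rfl, if_pos ht0]
          simp only [hA, if_pos ht0]
        · rw [if_neg hip]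
          simp only [hA, if_neg (hne i hip)]
      have hv : ∀ σ : Equiv.Perm (Fin m),
          ∑ p : Fin m, Pv σ p = ((List.finRange m).map fun i => B i (σ i)).prod := by
        intro σ
        have hσ : σ (σ.symm p0) = p0 := σ.apply_symm_apply p0
        have hσne : ∀ p : Fin m, p ≠ σ.symm p0 → ¬(t = Fin.castLE hmℓ (σ p)) := by
          intro p hp h
          refine hne (σ p) (fun hc => hp ?_) h
          have := congrArg σ.symm hc
          simpa using this
        rw [Fintype.sum_eq_single (σ.symm p0) (fun p hp => by
          simp only [hPv, if_neg (hσne p hp)]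
          all_goals exact prod_if_zero (List.finRange m) (List.mem_finRange p) _)]
        simp only [hPv]
        refine congrArg List.prod (List.map_congr_left fun i _ => ?_)
        by_cases hip : i = σ.symm p0
        · subst hip
          rw [if_pos rfl, hσ, if_pos ht0]
          simp only [hB, hσ, if_pos ht0]
        · rw [if_neg hip]
          simp only [hB, if_neg (hσne i hip)]
      have hcastpk : Fin.castLE hmℓ pk = k := Fin.ext rfl
      have hApq : p0 ≠ pk := by
        intro h
        have h' : (k : ℕ) + 1 = (k : ℕ) := congrArg Fin.val h
        omega
      have hpk_ne : ¬(t = Fin.castLE hmℓ pk) := hne pk (fun h => hApq h.symm)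
      have hAzero : ncdet A = 0 := by
        refine ncdet_zero_of_eq A ?_ hApq (Or.inl fun j => ?_)
        · intro i j a b
          simp only [hA]
          split_ifs <;> apply hcomm
        · simp only [hA, if_pos ht0, if_neg hpk_ne, hcastpk]
      have hBzero : ncdet B = 0 := by
        refine ncdet_zero_of_eq B ?_ hApq (Or.inr fun i => ?_)
        · intro i j a b
          simp only [hB]
          split_ifs <;> apply hcomm
        · simp only [hB, if_pos ht0, if_neg hpk_ne, hcastpk]
      calc ∑ σ : Equiv.Perm (Fin m),
            ((Equiv.Perm.sign σ : ℤ) • ∑ p : Fin m, (Pu σ p + Pv σ p))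
          = ∑ σ : Equiv.Perm (Fin m),
            (((Equiv.Perm.sign σ : ℤ) •
                ((List.finRange m).map fun i => A i (σ i)).prod) +
              ((Equiv.Perm.sign σ : ℤ) •
                ((List.finRange m).map fun i => B i (σ i)).prod)) := by
            refine Finset.sum_congr rfl fun σ _ => ?_
            rw [Finset.sum_add_distrib, hu σ, hv σ, smul_add]
        _ = ncdet A + ncdet B := by
            rw [Finset.sum_add_distrib]
            rfl
        _ = 0 := by rw [hAzero, hBzero, add_zero]
    · have hne : ∀ p : Fin m, ¬(t = Fin.castLE hmℓ p) := by
        intro p h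
        have h' : (k : ℕ) + 1 = (p : ℕ) := congrArg Fin.val h
        have := p.isLt
        omega
      refine Finset.sum_eq_zero fun σ _ => ?_
      have hz : ∀ p : Fin m, Pu σ p + Pv σ p = 0 := by
        intro p
        have h1 : Pu σ p = 0 := by
          simp only [hPu, if_neg (hne p)]
          all_goals exact prod_if_zero (List.finRange m) (List.mem_finRange p) _
        have h2 : Pv σ p = 0 := by
          simp only [hPv, if_neg (hne (σ p))]
          all_goals exact prod_if_zero (List.finRange m) (List.mem_finRange p) _
        rw [h1, h2, add_zero]
      rw [Finset.sum_congr rfl fun p _ => hz p, Finset.sum_const_zero, smul_zero]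
  · have hc : Commute (X ⟨ℓ - 1, by omega⟩ ⟨ℓ - 1, by omega⟩)
        (ncdet (fun p q : Fin m => X (Fin.castLE hmℓ p) (Fin.castLE hmℓ q))) := by
      simp only [ncdet]
      refine Commute.sum_right _ _ _ fun σ _ => ?_
      rw [zsmul_eq_mul]
      refine Commute.mul_right ((Int.cast_commute _ _).symm) ?_
      refine Commute.list_prod_right _ _ fun y hy => ?_
      obtain ⟨i, -, rfl⟩ := List.mem_map.mp hy
      exact hcomm _ _ _ _
    rw [hc.eq, sub_self]
end

section
/- Let ℓ ≥ 4 and m with 2m ≤ ℓ. In U(sl_ℓ(ℂ)), let Δ_m = det((E_{i, ℓ+1−j})_{1≤i,j≤m}) (well-defined since the entries commute). Then for every standard raising generator E_{k,k+1} (1 ≤ k ≤ ℓ−1), the adjoint action satisfies [E_{k,k+1}, Δ_m] = 0. -/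
/-!
Write `x = E_{k,k+1}` and `Δ = ncdet M` with `M i j = E_{i,ℓ-1-j}`. Since `ad x` is a derivation,
`[x, Δ]` is obtained from the Leibniz expansion by applying `ad x` to one factor at a time.
Because `2m ≤ ℓ`, the row indices of `M` lie below its column indices, and there are three cases.
If `k + 1 < m`, `ad x` kills every entry outside row `k + 1` and sends `E_{k+1,c}` to `E_{k,c}`,
so `[x, Δ]` is the determinant of a matrix with two equal rows, which vanishes as the entries
commute. If `ℓ ≤ k + m`, dually `ad x` kills every entry outside the column of `E_{i,k}` and sends
`E_{i,k}` to `-E_{i,k+1}`, giving (up to sign) a determinant with two equal columns. Otherwise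
`x` commutes with every entry.
-/

open UniversalEnvelopingAlgebra LieAlgebra.SpecialLinear

open Equiv Function

theorem List.commutator_prod_map_eq_update {R α : Type*} [Ring R] [DecidableEq α] {x : R}
    {f : α → R} {a : α} {L : List α} (hL : L.Nodup) (ha : a ∈ L)
    (hx : ∀ b ∈ L, b ≠ a → Commute x (f b)) :
    x * (L.map f).prod - (L.map f).prod * x
      = (L.map (update f a (x * f a - f a * x))).prod := by
  induction L with
  | nil => simp at ha
  | cons b L ih =>
    obtain ⟨hbL, hL⟩ := List.nodup_cons.1 hL
    simp only [List.map_cons, List.prod_cons]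
    by_cases hba : b = a
    · subst hba
      have hxL : Commute x (L.map f).prod :=
        Commute.list_prod_right _ _ fun y hy => by
          obtain ⟨c, hc, rfl⟩ := List.mem_map.1 hy
          exact hx c (List.mem_cons_of_mem _ hc) (ne_of_mem_of_not_mem hc hbL)
      have hmap : L.map (update f b (x * f b - f b * x)) = L.map f :=
        List.map_congr_left fun c hc => update_of_ne (ne_of_mem_of_not_mem hc hbL) _ _
      rw [hmap, update_self, sub_mul, mul_assoc (f b), ← hxL.eq]
      simp only [mul_assoc]
    · have ha' : a ∈ L := (List.mem_cons.1 ha).resolve_left (Ne.symm hba)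
      have hxb : Commute x (f b) := hx b List.mem_cons_self hba
      rw [update_of_ne hba, ← ih hL ha' fun c hc => hx c (List.mem_cons_of_mem _ hc),
        mul_sub, ← mul_assoc, hxb.eq, mul_assoc, mul_assoc]

section Ncdet

variable {R : Type*} [Ring R] {m : ℕ}

noncomputable def ncdetTerm (M : Fin m → Fin m → R) (σ : Perm (Fin m)) : R :=
  ((List.finRange m).map (fun i => M i (σ i))).prod

theorem ncdet_eq_sum_ncdetTerm (M : Fin m → Fin m → R) :
    ncdet M = ∑ σ : Perm (Fin m), (Perm.sign σ : ℤ) • ncdetTerm M σ := rfl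

theorem sum_sign_smul_eq_zero_of_involutive {ι : Type*} [DecidableEq ι] [Fintype ι]
    (f : Perm ι → R) (g : Perm ι → Perm ι) (hg : Involutive g)
    (hsign : ∀ σ, Perm.sign (g σ) = -Perm.sign σ) (hf : ∀ σ, f (g σ) = f σ) :
    ∑ σ, (Perm.sign σ : ℤ) • f σ = 0 := by
  refine Finset.sum_ninvolution g (fun σ => ?_) (fun σ _ h => ?_) (fun _ => Finset.mem_univ _) hg
  · rw [hsign, hf, Units.val_neg, neg_smul, add_neg_cancel]
  · have := hsign σ
    rw [h] at this
    exact units_ne_neg_self _ this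

theorem commutator_ncdet_of_ncdetTerm {x : R} {M N : Fin m → Fin m → R}
    (h : ∀ σ, x * ncdetTerm M σ - ncdetTerm M σ * x = ncdetTerm N σ) :
    x * ncdet M - ncdet M * x = ncdet N := by
  simp only [ncdet_eq_sum_ncdetTerm, Finset.mul_sum, Finset.sum_mul, ← Finset.sum_sub_distrib,
    mul_smul_comm, smul_mul_assoc, ← smul_sub, h]

theorem commutator_ncdet_of_commute_off_row {x : R} {M : Fin m → Fin m → R} {i₀ : Fin m}
    (hx : ∀ i j, i ≠ i₀ → Commute x (M i j)) :
    x * ncdet M - ncdet M * x = ncdet (update M i₀ fun j => x * M i₀ j - M i₀ j * x) := by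
  refine commutator_ncdet_of_ncdetTerm fun σ => ?_
  rw [ncdetTerm, List.commutator_prod_map_eq_update (List.nodup_finRange m)
    (List.mem_finRange i₀) fun i _ hi => hx i (σ i) hi, ncdetTerm]
  congr 1
  refine List.map_congr_left fun i _ => ?_
  by_cases hi : i = i₀
  · subst hi; simp
  · simp [hi]

theorem commutator_ncdet_of_commute_off_col {x : R} {M : Fin m → Fin m → R} {j₀ : Fin m}
    (hx : ∀ i j, j ≠ j₀ → Commute x (M i j)) :
    x * ncdet M - ncdet M * x
      = ncdet (fun i => update (M i) j₀ (x * M i j₀ - M i j₀ * x)) := by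
  refine commutator_ncdet_of_ncdetTerm fun σ => ?_
  rw [ncdetTerm, List.commutator_prod_map_eq_update (List.nodup_finRange m)
    (List.mem_finRange (σ.symm j₀)) fun i _ hi => hx i (σ i) (mt σ.eq_symm_apply.2 hi),
    ncdetTerm]
  congr 1
  refine List.map_congr_left fun i _ => ?_
  by_cases hi : i = σ.symm j₀
  · subst hi; simp
  · simp [hi, mt σ.eq_symm_apply.2 hi]

theorem ncdet_eq_zero_of_col_eq {M : Fin m → Fin m → R} {j₀ j₁ : Fin m} (hj : j₀ ≠ j₁)
    (h : ∀ i, M i j₀ = M i j₁) : ncdet M = 0 := by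
  refine sum_sign_smul_eq_zero_of_involutive _ (swap j₀ j₁ * ·)
    (fun σ => swap_mul_self_mul _ _ _) (fun σ => by simp [Perm.sign_swap hj]) fun σ => ?_
  refine congrArg List.prod (List.map_congr_left fun i _ => ?_)
  simp only [Perm.mul_apply, swap_apply_def]
  split_ifs <;> simp_all

theorem ncdet_eq_zero_of_row_eq {M : Fin m → Fin m → R}
    (hM : ∀ i j i' j', Commute (M i j) (M i' j')) {i₀ i₁ : Fin m} (hi : i₀ ≠ i₁)
    (h : M i₀ = M i₁) : ncdet M = 0 := by
  refine sum_sign_smul_eq_zero_of_involutive _ (· * swap i₀ i₁)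
    (fun σ => mul_swap_mul_self _ _ _) (fun σ => by simp [Perm.sign_swap hi]) fun σ => ?_
  have hrow : ∀ i, M (swap i₀ i₁ i) = M i := fun i => by
    rw [swap_apply_def]; split_ifs <;> simp_all
  calc ncdetTerm M (σ * swap i₀ i₁)
      = (((List.finRange m).map (swap i₀ i₁)).map fun i => M i (σ i)).prod := by
        simp [ncdetTerm, Function.comp_def, hrow]
    _ = ncdetTerm M σ :=
        ((Perm.map_finRange_perm (swap i₀ i₁)).map _).prod_eq'
          ((List.pairwise_of_forall fun _ _ => trivial).map _ fun _ _ _ => hM _ _ _ _)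

theorem commute_ncdet_of_commute {x : R} {M : Fin m → Fin m → R}
    (hx : ∀ i j, Commute x (M i j)) : Commute x (ncdet M) :=
  .sum_right _ _ _ fun σ _ => .smul_right (.list_prod_right _ _ fun _ hy => by
    obtain ⟨i, -, rfl⟩ := List.mem_map.1 hy
    exact hx i (σ i)) _

theorem commute_ncdet_of_commutator_row_eq {x : R} {M : Fin m → Fin m → R}
    (hM : ∀ i j i' j', Commute (M i j) (M i' j')) {i₀ i₁ : Fin m} (hi : i₀ ≠ i₁)
    (hx : ∀ i j, i ≠ i₁ → Commute x (M i j)) (hx₁ : ∀ j, x * M i₁ j - M i₁ j * x = M i₀ j) :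
    Commute x (ncdet M) := by
  refine sub_eq_zero.1 ?_
  rw [commutator_ncdet_of_commute_off_row hx]
  simp only [hx₁]
  refine ncdet_eq_zero_of_row_eq (fun i j i' j' => ?_) hi (by rw [update_of_ne hi, update_self])
  simp only [update_apply]
  split_ifs <;> exact hM _ _ _ _

theorem commute_ncdet_of_commutator_col_eq {x : R} {M : Fin m → Fin m → R} {j₀ j₁ : Fin m}
    (hj : j₀ ≠ j₁) (hx : ∀ i j, j ≠ j₀ → Commute x (M i j))
    (hx₀ : ∀ i, x * M i j₀ - M i j₀ * x = M i j₁) : Commute x (ncdet M) := by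
  refine sub_eq_zero.1 ?_
  rw [commutator_ncdet_of_commute_off_col hx]
  exact ncdet_eq_zero_of_col_eq hj fun i => by rw [update_self, update_of_ne hj.symm, hx₀]

end Ncdet

attribute [local instance 100] LieRing.ofAssociativeRing

theorem UniversalEnvelopingAlgebra.ι_mul_sub_mul {R L : Type*} [CommRing R] [LieRing L]
    [LieAlgebra R L] (x y : L) : ι R x * ι R y - ι R y * ι R x = ι R ⁅x, y⁆ := by
  rw [LieHom.map_lie, Ring.lie_def]

namespace LieAlgebra.SpecialLinear

variable {n R : Type*} [Fintype n] [DecidableEq n] [CommRing R] {a b c d : n}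

theorem lie_single_single_of_ne (h₁ : a ≠ b) (h₂ : c ≠ d) (hbc : b ≠ c) (hda : d ≠ a)
    (r s : R) : ⁅single a b h₁ r, single c d h₂ s⁆ = 0 := by
  ext : 1
  simp only [LieSubalgebra.coe_bracket, val_single, Ring.lie_def, ZeroMemClass.coe_zero]
  rw [Matrix.single_mul_single_of_ne (h := hbc), Matrix.single_mul_single_of_ne (h := hda),
    sub_zero]

theorem lie_single_single_same (h₁ : a ≠ b) (h₂ : b ≠ d) (had : a ≠ d) (r s : R) :
    ⁅single a b h₁ r, single b d h₂ s⁆ = single a d had (r * s) := by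
  ext : 1
  simp only [LieSubalgebra.coe_bracket, val_single, Ring.lie_def]
  rw [Matrix.single_mul_single_same, Matrix.single_mul_single_of_ne (h := had.symm), sub_zero]

end LieAlgebra.SpecialLinear

/-- The image in `U(sl_ℓ(R))` of the matrix unit `E_{ab}`, indexed by natural numbers so that
index arithmetic stays in `ℕ`; it is `0` unless `a ≠ b` and `a, b < ℓ`. -/
noncomputable def slUnit (R : Type*) [CommRing R] (ℓ a b : ℕ) :
    UniversalEnvelopingAlgebra R (sl (Fin ℓ) R) :=
  if h : a < ℓ ∧ b < ℓ ∧ a ≠ b then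
    ι R (single ⟨a, h.1⟩ ⟨b, h.2.1⟩ (Fin.ne_of_val_ne h.2.2) 1)
  else 0

section SlUnit

variable {R : Type*} [CommRing R] {ℓ : ℕ}

theorem ι_single_one_eq_slUnit {a b : Fin ℓ} (h : a ≠ b) :
    ι R (single a b h 1) = slUnit R ℓ a b := by
  rw [slUnit, dif_pos ⟨a.isLt, b.isLt, Fin.val_ne_of_ne h⟩]

theorem commute_slUnit {a b c d : ℕ} (hbc : b ≠ c) (hda : d ≠ a) :
    Commute (slUnit R ℓ a b) (slUnit R ℓ c d) := by
  unfold slUnit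
  split_ifs
  · exact sub_eq_zero.1 <| by
      rw [ι_mul_sub_mul, lie_single_single_of_ne _ _ (Fin.ne_of_val_ne hbc)
        (Fin.ne_of_val_ne hda), map_zero]
  all_goals simp

theorem slUnit_mul_sub_mul {a b d : ℕ} (ha : a < ℓ) (hb : b < ℓ) (hd : d < ℓ) (hab : a ≠ b)
    (hbd : b ≠ d) (had : a ≠ d) :
    slUnit R ℓ a b * slUnit R ℓ b d - slUnit R ℓ b d * slUnit R ℓ a b = slUnit R ℓ a d := by
  rw [slUnit, slUnit, slUnit, dif_pos ⟨ha, hb, hab⟩, dif_pos ⟨hb, hd, hbd⟩,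
    dif_pos ⟨ha, hd, had⟩, ι_mul_sub_mul, lie_single_single_same _ _ (Fin.ne_of_val_ne had),
    mul_one]

end SlUnit

theorem commute_slUnit_ncdet_antidiag {R : Type*} [CommRing R] {ℓ m k : ℕ} (hm : 2 * m ≤ ℓ)
    (hk : k + 1 < ℓ) :
    Commute (slUnit R ℓ k (k + 1)) (ncdet fun i j : Fin m => slUnit R ℓ i (ℓ - 1 - j)) := by
  rcases lt_or_ge (k + 1) m with hkm | hmk
  · refine commute_ncdet_of_commutator_row_eq (i₀ := ⟨k, by omega⟩) (i₁ := ⟨k + 1, hkm⟩)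
      (fun i j i' j' => commute_slUnit (by omega) (by omega))
      (Fin.ne_of_val_ne k.succ_ne_self.symm)
      (fun i j hi => commute_slUnit (fun h => hi (Fin.ext h.symm)) (by omega))
      fun j => slUnit_mul_sub_mul (by omega) hk (by omega) (by omega) (by omega) (by omega)
  rcases lt_or_ge (k + m) ℓ with hkℓ | hℓk
  · exact commute_ncdet_of_commute fun i j => commute_slUnit (by omega) (by omega)
  · -- `[-x, E_{i,k}] = E_{i,k+1}`: column `ℓ - 1 - k` is moved onto column `ℓ - 2 - k`.
    refine Commute.neg_left_iff.1 <| commute_ncdet_of_commutator_col_eq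
      (j₀ := ⟨ℓ - 1 - k, by omega⟩) (j₁ := ⟨ℓ - 2 - k, by omega⟩)
      (Fin.ne_of_val_ne (show ℓ - 1 - k ≠ ℓ - 2 - k by omega))
      (fun i j hj => .neg_left <| commute_slUnit (by omega) fun h =>
        hj (Fin.ext (show (j : ℕ) = ℓ - 1 - k by omega)))
      fun i => ?_
    have h₀ : ℓ - 1 - (ℓ - 1 - k) = k := by omega
    have h₁ : ℓ - 1 - (ℓ - 2 - k) = k + 1 := by omega
    simp only [h₀, h₁, neg_mul, mul_neg, sub_neg_eq_add, neg_add_eq_sub]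
    exact slUnit_mul_sub_mul (by omega) (by omega) hk (by omega) (by omega) (by omega)

/-- In `U(sl_ℓ(ℂ))`, with `Δ_m = det ((E_{i, ℓ+1-j})_{1 ≤ i,j ≤ m})` (where `2m ≤ ℓ`,
`ℓ ≥ 4`, so the entries pairwise commute), the adjoint action of every standard raising
generator `E_{k,k+1}` annihilates `Δ_m`. -/
theorem stmt_10 {ℓ m : ℕ} (hm : 2 * m ≤ ℓ)
    (Δ : UniversalEnvelopingAlgebra ℂ (sl (Fin ℓ) ℂ))
    (hΔ : Δ = ncdet (fun i j : Fin m =>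
      ι ℂ (single (⟨i, by omega⟩ : Fin ℓ) (⟨ℓ - 1 - j, by omega⟩ : Fin ℓ)
        (by apply Fin.ne_of_val_ne; simp only [Fin.val_mk]; have := i.isLt; have := j.isLt; omega) (1 : ℂ)))) :
    ∀ (k : Fin ℓ) (hk : (k : ℕ) + 1 < ℓ),
      ι ℂ (single k (⟨(k : ℕ) + 1, hk⟩ : Fin ℓ) (by apply Fin.ne_of_val_ne; simp only [Fin.val_mk]; omega) (1 : ℂ)) * Δ -
        Δ * ι ℂ (single k (⟨(k : ℕ) + 1, hk⟩ : Fin ℓ) (by apply Fin.ne_of_val_ne; simp only [Fin.val_mk]; omega) (1 : ℂ)) = 0 := by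
  intro k hk
  simp only [ι_single_one_eq_slUnit] at hΔ ⊢
  rw [hΔ, sub_eq_zero]
  exact (commute_slUnit_ncdet_antidiag hm hk).eq
end
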